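/- Let f, g be positive probability densities on ℝ³ in L¹ ∩ L² ∩ L∞ with KL(f‖g) < ∞. Then for every v, ‖(A ∗ (f−g))(v)‖ ≤ C(√(2(‖f‖_∞+‖g‖_∞) KL(f‖g)) + √(2 KL(f‖g))), where A(z) = |z|^{−3}(|z|² I − z⊗z) and C is an absolute constant. -/

import Mathlib

/-!
Each entry of `A(z)` is bounded by `2|z|⁻¹`. Splitting `|z|⁻¹` into its restriction to the unit
ball, which is square integrable in `ℝ³`, and a remainder bounded by `1`, Cauchy–Schwarz bounds
the entries of `A ∗ (f - g)` by `‖f - g‖_{L²}` and `‖f - g‖_{L¹}`. Both norms are controlled by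
the squared Hellinger distance `∫ (√f - √g)²`, through `|f - g| = |√f - √g| (√f + √g)` and
`(√f + √g)² ≤ 2 (f + g)`; and the Hellinger distance is at most `KL(f‖g)`, integrating the
pointwise inequality `(√a - √b)² ≤ a log (a / b) - a + b` and using `∫ f = ∫ g`.
-/

open MeasureTheory Matrix Metric Real Set

section SqrtInequalities

variable {a b : ℝ}

theorem abs_sub_eq_abs_sqrt_sub_mul_sqrt_add (ha : 0 ≤ a) (hb : 0 ≤ b) :
    |a - b| = |√a - √b| * (√a + √b) := by
  conv_lhs => rw [← sq_sqrt ha, ← sq_sqrt hb]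
  rw [sq_sub_sq, abs_mul, abs_of_nonneg (by positivity : 0 ≤ √a + √b), mul_comm]

theorem sq_sqrt_sub_sqrt_le_add (ha : 0 ≤ a) (hb : 0 ≤ b) : (√a - √b) ^ 2 ≤ a + b := by
  nlinarith [sq_sqrt ha, sq_sqrt hb, mul_nonneg (sqrt_nonneg a) (sqrt_nonneg b)]

theorem sq_sqrt_add_sqrt_le (ha : 0 ≤ a) (hb : 0 ≤ b) : (√a + √b) ^ 2 ≤ 2 * (a + b) := by
  nlinarith [sq_sqrt ha, sq_sqrt hb, sq_nonneg (√a - √b)]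

theorem sq_sub_le_two_mul_add_mul_sq_sqrt_sub_sqrt (ha : 0 ≤ a) (hb : 0 ≤ b) :
    (a - b) ^ 2 ≤ 2 * (a + b) * (√a - √b) ^ 2 := by
  rw [← sq_abs, abs_sub_eq_abs_sqrt_sub_mul_sqrt_add ha hb, mul_pow, sq_abs, mul_comm]
  exact mul_le_mul_of_nonneg_right (sq_sqrt_add_sqrt_le ha hb) (sq_nonneg _)

theorem sq_sqrt_sub_sqrt_le_mul_log_div (ha : 0 < a) (hb : 0 < b) :
    (√a - √b) ^ 2 ≤ a * log (a / b) - a + b := by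
  have hsa : 0 < √a := sqrt_pos.2 ha
  have hsb : 0 < √b := sqrt_pos.2 hb
  have hlog : 1 - √b / √a ≤ log (√a / √b) := by
    simpa only [inv_div] using one_sub_inv_le_log_of_pos (div_pos hsa hsb)
  have hlog_div : log (a / b) = 2 * log (√a / √b) := by
    rw [log_div hsa.ne' hsb.ne', log_sqrt ha.le, log_sqrt hb.le, log_div ha.ne' hb.ne']
    ring
  have hmul : a * (√b / √a) = √a * √b := by
    rw [mul_div_assoc', div_eq_iff hsa.ne']
    linear_combination -√b * mul_self_sqrt ha.le
  rw [hlog_div]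
  nlinarith [mul_le_mul_of_nonneg_left hlog ha.le, sq_sqrt ha.le, sq_sqrt hb.le]

end SqrtInequalities

section Pinsker

variable {α : Type*} [MeasurableSpace α] {μ : Measure α} {f g : α → ℝ}

theorem integral_mul_le_sqrt_integral_sq_mul_sqrt_integral_sq (hf0 : 0 ≤ᵐ[μ] f)
    (hg0 : 0 ≤ᵐ[μ] g) (hf : MemLp f 2 μ) (hg : MemLp g 2 μ) :
    ∫ x, f x * g x ∂μ ≤ √(∫ x, f x ^ 2 ∂μ) * √(∫ x, g x ^ 2 ∂μ) := by
  have h := integral_mul_le_Lp_mul_Lq_of_nonneg Real.HolderConjugate.two_two hf0 hg0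
    (by rwa [ENNReal.ofReal_ofNat]) (by rwa [ENNReal.ofReal_ofNat])
  simpa only [rpow_two, ← sqrt_eq_rpow] using h

theorem integrable_sq_sqrt_sub_sqrt (hf0 : 0 ≤ f) (hg0 : 0 ≤ g) (hf : Integrable f μ)
    (hg : Integrable g μ) : Integrable (fun x => (√(f x) - √(g x)) ^ 2) μ := by
  refine (hf.add hg).mono'
    ((hf.aemeasurable.sqrt.sub hg.aemeasurable.sqrt).pow_const 2).aestronglyMeasurable ?_
  filter_upwards with x
  rw [norm_of_nonneg (sq_nonneg _)]
  exact sq_sqrt_sub_sqrt_le_add (hf0 x) (hg0 x)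

theorem integral_sq_sqrt_sub_sqrt_le_integral_mul_log_div (hf0 : ∀ x, 0 < f x)
    (hg0 : ∀ x, 0 < g x) (hf : Integrable f μ) (hg : Integrable g μ)
    (hmass : ∫ x, f x ∂μ = ∫ x, g x ∂μ) (hKL : Integrable (fun x => f x * log (f x / g x)) μ) :
    ∫ x, (√(f x) - √(g x)) ^ 2 ∂μ ≤ ∫ x, f x * log (f x / g x) ∂μ :=
  calc ∫ x, (√(f x) - √(g x)) ^ 2 ∂μ
      ≤ ∫ x, (f x * log (f x / g x) - f x + g x) ∂μ :=
        integral_mono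
          (integrable_sq_sqrt_sub_sqrt (fun x => (hf0 x).le) (fun x => (hg0 x).le) hf hg)
          ((hKL.sub hf).add hg) fun x => sq_sqrt_sub_sqrt_le_mul_log_div (hf0 x) (hg0 x)
    _ = ∫ x, f x * log (f x / g x) ∂μ := by
        have hKL_sub : Integrable (fun x => f x * log (f x / g x) - f x) μ := hKL.sub hf
        rw [integral_add hKL_sub hg, integral_sub hKL hf, hmass]; ring

theorem integral_abs_sub_le_sqrt_mul_sqrt (hf0 : 0 ≤ f) (hg0 : 0 ≤ g) (hf : Integrable f μ)
    (hg : Integrable g μ) :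
    ∫ x, |f x - g x| ∂μ ≤
      √(∫ x, (√(f x) - √(g x)) ^ 2 ∂μ) * √(2 * (∫ x, f x ∂μ + ∫ x, g x ∂μ)) := by
  have hsum_sq : Integrable (fun x => (√(f x) + √(g x)) ^ 2) μ := by
    refine ((hf.add hg).const_mul 2).mono'
      ((hf.aemeasurable.sqrt.add hg.aemeasurable.sqrt).pow_const 2).aestronglyMeasurable ?_
    filter_upwards with x
    rw [norm_of_nonneg (sq_nonneg _)]
    exact sq_sqrt_add_sqrt_le (hf0 x) (hg0 x)
  have hdiff : MemLp (fun x => |√(f x) - √(g x)|) 2 μ := by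
    refine (memLp_two_iff_integrable_sq ?_).2 ?_
    · exact (hf.aemeasurable.sqrt.sub hg.aemeasurable.sqrt).abs.aestronglyMeasurable
    · simpa only [sq_abs] using integrable_sq_sqrt_sub_sqrt hf0 hg0 hf hg
  have hsum : MemLp (fun x => √(f x) + √(g x)) 2 μ :=
    (memLp_two_iff_integrable_sq
      (hf.aemeasurable.sqrt.add hg.aemeasurable.sqrt).aestronglyMeasurable).2 hsum_sq
  calc ∫ x, |f x - g x| ∂μ = ∫ x, |√(f x) - √(g x)| * (√(f x) + √(g x)) ∂μ := by
        simp only [abs_sub_eq_abs_sqrt_sub_mul_sqrt_add (hf0 _) (hg0 _)]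
    _ ≤ √(∫ x, |√(f x) - √(g x)| ^ 2 ∂μ) * √(∫ x, (√(f x) + √(g x)) ^ 2 ∂μ) :=
        integral_mul_le_sqrt_integral_sq_mul_sqrt_integral_sq
          (.of_forall fun _ => abs_nonneg _) (.of_forall fun _ => by positivity) hdiff hsum
    _ ≤ √(∫ x, (√(f x) - √(g x)) ^ 2 ∂μ) * √(2 * (∫ x, f x ∂μ + ∫ x, g x ∂μ)) := by
        simp only [sq_abs]
        gcongr
        rw [← integral_add hf hg, ← integral_const_mul]
        exact integral_mono hsum_sq ((hf.add hg).const_mul 2)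
          fun x => sq_sqrt_add_sqrt_le (hf0 x) (hg0 x)

/-- Pinsker's inequality, with the constant `2` that the Hellinger distance gives. -/
theorem integral_abs_sub_le_two_mul_sqrt_integral_mul_log_div (hf0 : ∀ x, 0 < f x)
    (hg0 : ∀ x, 0 < g x) (hf : Integrable f μ) (hg : Integrable g μ) (hf1 : ∫ x, f x ∂μ = 1)
    (hg1 : ∫ x, g x ∂μ = 1) (hKL : Integrable (fun x => f x * log (f x / g x)) μ) :
    ∫ x, |f x - g x| ∂μ ≤ 2 * √(∫ x, f x * log (f x / g x) ∂μ) :=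
  calc ∫ x, |f x - g x| ∂μ
      ≤ √(∫ x, (√(f x) - √(g x)) ^ 2 ∂μ) * √(2 * (∫ x, f x ∂μ + ∫ x, g x ∂μ)) :=
        integral_abs_sub_le_sqrt_mul_sqrt (fun x => (hf0 x).le) (fun x => (hg0 x).le) hf hg
    _ = √(∫ x, (√(f x) - √(g x)) ^ 2 ∂μ) * 2 := by
        rw [hf1, hg1, show (2 : ℝ) * (1 + 1) = 2 ^ 2 by norm_num, sqrt_sq zero_le_two]
    _ ≤ √(∫ x, f x * log (f x / g x) ∂μ) * 2 :=
        mul_le_mul_of_nonneg_right (sqrt_le_sqrt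
          (integral_sq_sqrt_sub_sqrt_le_integral_mul_log_div hf0 hg0 hf hg (hf1.trans hg1.symm)
            hKL)) zero_le_two
    _ = 2 * √(∫ x, f x * log (f x / g x) ∂μ) := mul_comm _ _

theorem ae_le_toReal_eLpNorm_top (hf : MemLp f ⊤ μ) : ∀ᵐ x ∂μ, f x ≤ (eLpNorm f ⊤ μ).toReal := by
  filter_upwards [ae_le_lpNorm_exponent_top hf] with x hx
  rw [toReal_eLpNorm hf.aestronglyMeasurable]
  exact (le_abs_self _).trans hx

theorem integral_sq_sub_le_mul_integral_sq_sqrt_sub_sqrt (hf0 : 0 ≤ f) (hg0 : 0 ≤ g)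
    (hf : MemLp f ⊤ μ) (hg : MemLp g ⊤ μ) (hH : Integrable (fun x => (√(f x) - √(g x)) ^ 2) μ) :
    ∫ x, (f x - g x) ^ 2 ∂μ ≤
      2 * ((eLpNorm f ⊤ μ).toReal + (eLpNorm g ⊤ μ).toReal) * ∫ x, (√(f x) - √(g x)) ^ 2 ∂μ := by
  rw [← integral_const_mul]
  refine integral_mono_of_nonneg (.of_forall fun _ => sq_nonneg _) (hH.const_mul _) ?_
  filter_upwards [ae_le_toReal_eLpNorm_top hf, ae_le_toReal_eLpNorm_top hg] with x hfx hgx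
  calc (f x - g x) ^ 2 ≤ 2 * (f x + g x) * (√(f x) - √(g x)) ^ 2 :=
        sq_sub_le_two_mul_add_mul_sq_sqrt_sub_sqrt (hf0 x) (hg0 x)
    _ ≤ _ := by gcongr

/-- Pinsker's inequality in `L²`. -/
theorem integral_sq_sub_le_mul_integral_mul_log_div (hf0 : ∀ x, 0 < f x) (hg0 : ∀ x, 0 < g x)
    (hf : Integrable f μ) (hg : Integrable g μ) (hf_top : MemLp f ⊤ μ) (hg_top : MemLp g ⊤ μ)
    (hmass : ∫ x, f x ∂μ = ∫ x, g x ∂μ) (hKL : Integrable (fun x => f x * log (f x / g x)) μ) :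
    ∫ x, (f x - g x) ^ 2 ∂μ ≤
      2 * ((eLpNorm f ⊤ μ).toReal + (eLpNorm g ⊤ μ).toReal) * ∫ x, f x * log (f x / g x) ∂μ := by
  have hf0' : 0 ≤ f := fun x => (hf0 x).le
  have hg0' : 0 ≤ g := fun x => (hg0 x).le
  refine (integral_sq_sub_le_mul_integral_sq_sqrt_sub_sqrt hf0' hg0' hf_top hg_top
    (integrable_sq_sqrt_sub_sqrt hf0' hg0' hf hg)).trans ?_
  refine mul_le_mul_of_nonneg_left ?_ (by positivity)
  exact integral_sq_sqrt_sub_sqrt_le_integral_mul_log_div hf0 hg0 hf hg hmass hKL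

end Pinsker

section NearFieldSplitting

variable {E : Type*} [NormedAddCommGroup E]

noncomputable def truncatedInvNorm (z : E) : ℝ :=
  (ball (0 : E) 1).indicator (fun z => ‖z‖⁻¹) z

theorem truncatedInvNorm_nonneg (z : E) : 0 ≤ truncatedInvNorm z :=
  indicator_nonneg (fun _ _ => inv_nonneg.2 (norm_nonneg _)) z

theorem inv_norm_le_truncatedInvNorm_add_one (z : E) : ‖z‖⁻¹ ≤ truncatedInvNorm z + 1 := by
  by_cases hz : z ∈ ball (0 : E) 1
  · rw [truncatedInvNorm, indicator_of_mem hz]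
    linarith
  · rw [truncatedInvNorm, indicator_of_notMem hz, zero_add]
    exact inv_le_one_of_one_le₀ (by simpa using hz)

variable [NormedSpace ℝ E] [FiniteDimensional ℝ E] [MeasurableSpace E] [BorelSpace E]
  {μ : Measure E} [μ.IsAddHaarMeasure]

theorem memLp_two_truncatedInvNorm (hd : 2 < Module.finrank ℝ E) :
    MemLp (truncatedInvNorm (E := E)) 2 μ := by
  have hmeas : Measurable (truncatedInvNorm (E := E)) :=
    measurable_norm.inv.indicator measurableSet_ball
  refine (memLp_two_iff_integrable_sq hmeas.aestronglyMeasurable).2 ?_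
  have hsq : (fun z => truncatedInvNorm z ^ 2) =
      (ball (0 : E) 1).indicator fun z => ‖z‖ ^ (-2 : ℝ) := by
    ext z
    by_cases hz : z ∈ ball (0 : E) 1
    · rw [truncatedInvNorm, indicator_of_mem hz, indicator_of_mem hz, rpow_neg (norm_nonneg _),
        rpow_two, inv_pow]
    · rw [truncatedInvNorm, indicator_of_notMem hz, indicator_of_notMem hz, zero_pow two_ne_zero]
  rw [hsq, integrable_indicator_iff measurableSet_ball]
  refine integrableOn_ball_of_norm_le_rpow (C := 1) (α := 2) (by omega) (by exact_mod_cast hd)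
    (.of_forall fun z => ?_) (measurable_norm.pow_const _).aestronglyMeasurable
  rw [one_mul, norm_of_nonneg (rpow_nonneg (norm_nonneg _) _)]

theorem abs_integral_kernel_sub_mul_le (hd : 2 < Module.finrank ℝ E) {k : E → ℝ} {c : ℝ}
    (hc : 0 ≤ c) (hk : ∀ z, |k z| ≤ c * ‖z‖⁻¹) {h : E → ℝ} (hh1 : Integrable h μ)
    (hh2 : MemLp h 2 μ) (v : E) :
    |∫ w, k (v - w) * h w ∂μ| ≤
      c * (√(∫ z, truncatedInvNorm z ^ 2 ∂μ) * √(∫ w, h w ^ 2 ∂μ) + ∫ w, |h w| ∂μ) := by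
  have hT : MemLp (fun w => truncatedInvNorm (v - w)) 2 μ :=
    (memLp_two_truncatedInvNorm hd).comp_measurePreserving (Measure.measurePreserving_sub_left μ v)
  have hnear_int : Integrable (fun w => truncatedInvNorm (v - w) * |h w|) μ :=
    hT.integrable_mul hh2.abs
  have hnear : ∫ w, truncatedInvNorm (v - w) * |h w| ∂μ ≤
      √(∫ z, truncatedInvNorm z ^ 2 ∂μ) * √(∫ w, h w ^ 2 ∂μ) := by
    refine (integral_mul_le_sqrt_integral_sq_mul_sqrt_integral_sq
      (.of_forall fun _ => truncatedInvNorm_nonneg _) (.of_forall fun _ => abs_nonneg _)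
      hT hh2.abs).trans_eq ?_
    simp only [sq_abs, integral_sub_left_eq_self (fun z => truncatedInvNorm z ^ 2) μ v]
  calc |∫ w, k (v - w) * h w ∂μ|
      ≤ ∫ w, |k (v - w) * h w| ∂μ := abs_integral_le_integral_abs
    _ ≤ ∫ w, c * (truncatedInvNorm (v - w) * |h w| + |h w|) ∂μ := by
        refine integral_mono_of_nonneg (.of_forall fun _ => abs_nonneg _)
          ((hnear_int.add hh1.abs).const_mul c) (.of_forall fun w => ?_)
        dsimp only
        rw [abs_mul, ← add_one_mul, ← mul_assoc]
        gcongr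
        exact (hk _).trans (mul_le_mul_of_nonneg_left (inv_norm_le_truncatedInvNorm_add_one _) hc)
    _ = c * (∫ w, truncatedInvNorm (v - w) * |h w| ∂μ + ∫ w, |h w| ∂μ) := by
        rw [integral_const_mul, integral_add hnear_int hh1.abs]
    _ ≤ c * (√(∫ z, truncatedInvNorm z ^ 2 ∂μ) * √(∫ w, h w ^ 2 ∂μ) + ∫ w, |h w| ∂μ) := by
        gcongr

end NearFieldSplitting

/-- `A(z)`, the Landau collision kernel for Coulomb interactions. -/
noncomputable def landauKernel {ι : Type*} [Fintype ι] [DecidableEq ι] (z : EuclideanSpace ℝ ι)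
    (i j : ι) : ℝ :=
  ‖z‖ ^ (-3 : ℝ) * (‖z‖ ^ 2 * (if i = j then 1 else 0) - z i * z j)

theorem abs_landauKernel_le {ι : Type*} [Fintype ι] [DecidableEq ι] (z : EuclideanSpace ℝ ι)
    (i j : ι) : |landauKernel z i j| ≤ 2 * ‖z‖⁻¹ := by
  rcases eq_or_ne z 0 with rfl | hz
  · simp [landauKernel]
  have hz0 : 0 < ‖z‖ := norm_pos_iff.2 hz
  have hzi : |z i| ≤ ‖z‖ := PiLp.norm_apply_le z i
  have hzj : |z j| ≤ ‖z‖ := PiLp.norm_apply_le z j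
  have hbracket : |‖z‖ ^ 2 * (if i = j then 1 else 0) - z i * z j| ≤ 2 * ‖z‖ ^ 2 := by
    refine (abs_sub _ _).trans ?_
    rw [abs_mul, abs_mul, abs_of_nonneg (sq_nonneg ‖z‖)]
    have hδ : |(if i = j then (1 : ℝ) else 0)| ≤ 1 := by split_ifs <;> simp
    nlinarith [mul_le_mul hzi hzj (abs_nonneg _) hz0.le, abs_nonneg (z i),
      mul_le_mul_of_nonneg_left hδ (sq_nonneg ‖z‖)]
  rw [landauKernel, abs_mul, abs_of_nonneg (rpow_nonneg hz0.le _)]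
  calc ‖z‖ ^ (-3 : ℝ) * |‖z‖ ^ 2 * (if i = j then 1 else 0) - z i * z j|
      ≤ ‖z‖ ^ (-3 : ℝ) * (2 * ‖z‖ ^ 2) := by gcongr
    _ = 2 * ‖z‖⁻¹ := by
        rw [rpow_neg hz0.le, show (3 : ℝ) = (3 : ℕ) by norm_num, rpow_natCast]
        field_simp

theorem EuclideanSpace.norm_le_sum_abs {ι : Type*} [Fintype ι] (y : EuclideanSpace ℝ ι) :
    ‖y‖ ≤ ∑ i, |y i| := by
  classical
  conv_lhs => rw [← (EuclideanSpace.basisFun ι ℝ).sum_repr y]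
  refine (norm_sum_le _ _).trans_eq ?_
  simp [norm_smul]

theorem Matrix.norm_toEuclideanCLM_le_sum_abs {ι : Type*} [Fintype ι] [DecidableEq ι]
    (M : Matrix ι ι ℝ) : ‖toEuclideanCLM (𝕜 := ℝ) M‖ ≤ ∑ i, ∑ j, |M i j| := by
  refine ContinuousLinearMap.opNorm_le_bound _ (by positivity) fun x => ?_
  calc ‖toEuclideanCLM (𝕜 := ℝ) M x‖ ≤ ∑ i, |(toEuclideanCLM (𝕜 := ℝ) M x) i| :=
        EuclideanSpace.norm_le_sum_abs _
    _ = ∑ i, |∑ j, M i j * x j| := by simp [ofLp_toEuclideanCLM, mulVec, dotProduct]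
    _ ≤ ∑ i, ∑ j, |M i j| * ‖x‖ := by
        gcongr with i
        refine (Finset.abs_sum_le_sum_abs _ _).trans (Finset.sum_le_sum fun j _ => ?_)
        rw [abs_mul]
        gcongr
        exact PiLp.norm_apply_le x j
    _ = (∑ i, ∑ j, |M i j|) * ‖x‖ := by simp only [Finset.sum_mul]

/-- Pointwise bound on `A ∗ (f − g)` in terms of relative entropy, via Pinsker's
inequalities, for the Coulomb collision kernel `A(z) = |z|^{−3}(|z|² I − z⊗z)`. -/
theorem conv_A_bound_by_KL :
    ∃ C : ℝ, 0 < C ∧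
      ∀ (f g : EuclideanSpace ℝ (Fin 3) → ℝ),
        Measurable f → Measurable g →
        (∀ v, 0 < f v) → (∀ v, 0 < g v) →
        (∫ v, f v = 1) → (∫ v, g v = 1) →
        MemLp f 1 volume → MemLp f 2 volume → MemLp f ⊤ volume →
        MemLp g 1 volume → MemLp g 2 volume → MemLp g ⊤ volume →
        Integrable (fun v => f v * Real.log (f v / g v)) →
        ∀ (v : EuclideanSpace ℝ (Fin 3)) (M : Matrix (Fin 3) (Fin 3) ℝ),
          (∀ i j, M i j = ∫ w : EuclideanSpace ℝ (Fin 3),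
              (‖v - w‖ ^ (-3 : ℝ) *
                (‖v - w‖ ^ 2 * (if i = j then 1 else 0) - (v - w) i * (v - w) j)) *
                (f w - g w)) →
          ‖Matrix.toEuclideanCLM (𝕜 := ℝ) M‖ ≤
            C * (Real.sqrt (2 * ((eLpNorm f ⊤ volume).toReal + (eLpNorm g ⊤ volume).toReal) *
                    ∫ u, f u * Real.log (f u / g u)) +
                 Real.sqrt (2 * ∫ u, f u * Real.log (f u / g u))) := by
  set I := ∫ z : EuclideanSpace ℝ (Fin 3), truncatedInvNorm z ^ 2
  refine ⟨9 * (2 * √I + 4), by positivity, ?_⟩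
  intro f g _ _ hf0 hg0 hf1 hg1 hfL1 hfL2 hf_top hgL1 hgL2 hg_top hKL v M hM
  have hf := memLp_one_iff_integrable.1 hfL1
  have hg := memLp_one_iff_integrable.1 hgL1
  set KL := ∫ u, f u * log (f u / g u)
  set S := (eLpNorm f ⊤ volume).toReal + (eLpNorm g ⊤ volume).toReal
  have hKL0 : 0 ≤ KL := (integral_nonneg fun _ => sq_nonneg _).trans
    (integral_sq_sqrt_sub_sqrt_le_integral_mul_log_div hf0 hg0 hf hg (hf1.trans hg1.symm) hKL)
  have hL1 := integral_abs_sub_le_two_mul_sqrt_integral_mul_log_div hf0 hg0 hf hg hf1 hg1 hKL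
  have hL2 := integral_sq_sub_le_mul_integral_mul_log_div hf0 hg0 hf hg hf_top hg_top
    (hf1.trans hg1.symm) hKL
  have hentry : ∀ i j, |M i j| ≤ (2 * √I + 4) * (√(2 * S * KL) + √(2 * KL)) := fun i j =>
    calc |M i j| = |∫ w, landauKernel (v - w) i j * (f w - g w)| := by rw [hM i j]; rfl
      _ ≤ 2 * (√I * √(∫ w, (f w - g w) ^ 2) + ∫ w, |f w - g w|) :=
          abs_integral_kernel_sub_mul_le (by simp) zero_le_two (abs_landauKernel_le · i j)
            (hf.sub hg) (hfL2.sub hgL2) v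
      _ ≤ 2 * (√I * √(2 * S * KL) + 2 * √KL) := by gcongr
      _ ≤ (2 * √I + 4) * (√(2 * S * KL) + √(2 * KL)) := by
          nlinarith [sqrt_le_sqrt (by linarith : KL ≤ 2 * KL), sqrt_nonneg I,
            sqrt_nonneg (2 * S * KL), sqrt_nonneg (2 * KL),
            mul_nonneg (sqrt_nonneg I) (sqrt_nonneg (2 * KL))]
  calc ‖toEuclideanCLM (𝕜 := ℝ) M‖ ≤ ∑ i, ∑ j, |M i j| := M.norm_toEuclideanCLM_le_sum_abs
    _ ≤ ∑ _i : Fin 3, ∑ _j : Fin 3, (2 * √I + 4) * (√(2 * S * KL) + √(2 * KL)) := by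
        gcongr with i _ j _
        exact hentry i j
    _ = 9 * (2 * √I + 4) * (√(2 * S * KL) + √(2 * KL)) := by
        simp only [Finset.sum_const, Finset.card_univ, Fintype.card_fin, nsmul_eq_mul]; ring
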